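/- arXiv:2401.02229 — 8 statements merged into one kernel-verified Lean document; each statement's English description precedes it below -/
import Mathlib

section
/- Let R be a finitely generated commutative ring and m a maximal ideal of R. Then the quotient field R/m is finite. -/
/-!
`ℤ` is a Jacobson ring: its only non-maximal prime is `(0)`, and `(0)` is the intersection of the
maximal ideals `(p)`. By Zariski's lemma in its Jacobson form, a field `R ⧸ m` of finite type over
`ℤ` is then a finitely generated abelian group. Such a field cannot have characteristic zero, since
being integral over `ℤ` would force `ℤ` to be a field; so it is a finite-dimensional vector space
over some `ZMod p`, hence finite.
-/

theorem isJacobsonRing_of_ringJacobson_eq_bot {R : Type*} [CommRing R] [Ring.DimensionLEOne R]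
    (h : Ring.jacobson R = ⊥) : IsJacobsonRing R := by
  refine isJacobsonRing_iff_prime_eq.mpr fun P hP ↦ ?_
  rcases eq_or_ne P ⊥ with rfl | hP0
  · rw [Ideal.jacobson_bot, h]
  · have := hP.isMaximal hP0
    exact Ideal.jacobson_eq_self_of_isMaximal

theorem Int.ringJacobson_eq_bot : Ring.jacobson ℤ = ⊥ := by
  refine eq_bot_iff.mpr fun x hx ↦ ?_
  rw [← Ideal.jacobson_bot, Ideal.mem_jacobson_bot] at hx
  have hplus := Int.isUnit_iff.mp (hx 1)
  have hminus := Int.isUnit_iff.mp (hx (-1))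
  rw [Ideal.mem_bot]
  omega

instance Int.isJacobsonRing : IsJacobsonRing ℤ :=
  isJacobsonRing_of_ringJacobson_eq_bot Int.ringJacobson_eq_bot

theorem finite_of_module_finite_int (K : Type*) [Field K] [Module.Finite ℤ K] : Finite K := by
  obtain ⟨p, hp⟩ := CharP.exists K
  rcases CharP.char_is_prime_or_zero K p with hprime | rfl
  · have := Fact.mk hprime
    let := ZMod.algebra K p
    have : Module.Finite (ZMod p) K := .of_restrictScalars_finite ℤ (ZMod p) K
    exact Module.finite_of_finite (ZMod p)
  · have := CharP.charP_to_charZero K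
    have hℤ : IsField ℤ := (Algebra.IsIntegral.isField_iff_isField
      (algebraMap ℤ K).injective_int).mpr (Field.toIsField K)
    exact absurd hℤ Int.not_isField

/-- Every maximal ideal of a finitely generated commutative ring has finite residue
field. -/
theorem residueField_finite_of_finiteType (R : Type*) [CommRing R]
    (hR : Algebra.FiniteType ℤ R) (m : Ideal R) [m.IsMaximal] :
    Finite (R ⧸ m) := by
  let := Ideal.Quotient.field m
  have : Algebra.FiniteType ℤ (R ⧸ m) :=
    hR.of_surjective (Ideal.Quotient.mkₐ ℤ m) Ideal.Quotient.mk_surjective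
  have := finite_of_finite_type_of_isJacobsonRing ℤ (R ⧸ m)
  exact finite_of_module_finite_int (R ⧸ m)
end

section
/- Every finitely generated commutative ring is residually finite: the natural map from R to the product over all maximal ideals m of the m-adic completions of the localizations R_m is injective. -/
set_option synthInstance.maxHeartbeats 1000000
set_option maxHeartbeats 1000000


/-- A finitely generated commutative ring is residually finite: the natural map to the
product, over all maximal ideals `m`, of the `m`-adic completions of the localizations
at `m`, is injective. -/
theorem finiteType_ring_residually_finite (R : Type*) [CommRing R]
    (hR : Algebra.FiniteType ℤ R) :
    Function.Injective (fun r : R => fun m : MaximalSpectrum R =>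
      AdicCompletion.of (IsLocalRing.maximalIdeal (Localization.AtPrime m.asIdeal))
        (Localization.AtPrime m.asIdeal)
        (algebraMap R (Localization.AtPrime m.asIdeal) r)) := by
  have hNoeth : IsNoetherianRing R :=
    Algebra.FiniteType.isNoetherianRing ℤ R
  intro r s h
  have key : ∀ (J : Ideal R) (_ : J.IsMaximal),
      algebraMap R (Localization.AtPrime J) (r - s) = 0 := by
    intro J hJ
    have hcongr := congrFun h ⟨J, hJ⟩
    simp only at hcongr
    have hz : AdicCompletion.of (IsLocalRing.maximalIdeal (Localization.AtPrime J))
        (Localization.AtPrime J) (algebraMap R (Localization.AtPrime J) (r - s)) = 0 := by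
      rw [map_sub, map_sub, hcongr, sub_self]
    set L := Localization.AtPrime J
    have hLN : IsNoetherianRing L := IsLocalization.isNoetherianRing J.primeCompl L hNoeth
    set x := algebraMap R L (r - s) with hx
    have hmem : ∀ n : ℕ, x ∈ ((IsLocalRing.maximalIdeal L) ^ n • ⊤ : Submodule L L) := by
      intro n
      have h1 := congrArg (AdicCompletion.eval (IsLocalRing.maximalIdeal L) L n) hz
      rw [AdicCompletion.eval_of, (AdicCompletion.eval (IsLocalRing.maximalIdeal L) L n).map_zero] at h1
      rw [Submodule.mkQ_apply, Submodule.Quotient.mk_eq_zero] at h1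
      exact h1
    have hbot : (⨅ n : ℕ, (IsLocalRing.maximalIdeal L) ^ n : Ideal L) = ⊥ :=
      Ideal.iInf_pow_eq_bot_of_isLocalRing _ (IsLocalRing.maximalIdeal.isMaximal L).ne_top
    have : x ∈ (⨅ n : ℕ, (IsLocalRing.maximalIdeal L) ^ n : Ideal L) := by
      rw [Ideal.mem_iInf]
      intro n
      simpa [Ideal.smul_top_eq_map, smul_eq_mul, Ideal.mul_top] using hmem n
    rw [hbot] at this
    simpa using this
  have := eq_zero_of_localization (r - s) key
  exact sub_eq_zero.mp this
end

section
/- Let φ: Λ → Γ be an injective group homomorphism between finitely generated residually finite groups such that the induced map of profinite completions is an isomorphism. If there exists a homomorphism τ: Γ → Λ with τ ∘ φ = id_Λ (i.e., Λ is a retract of Γ via φ), then φ is an isomorphism. -/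
/-- The index type of finite quotients: finite-index normal subgroups. -/
def FinQuot (G : Type*) [Group G] : Type _ :=
  {N : Subgroup G // N.Normal ∧ N.FiniteIndex}

instance {G : Type*} [Group G] (N : FinQuot G) : N.1.Normal := N.2.1
instance {G : Type*} [Group G] (N : FinQuot G) : N.1.FiniteIndex := N.2.2

instance {G : Type*} [Group G] (N : FinQuot G) : TopologicalSpace (G ⧸ N.1) := ⊥

/-- The subgroup of compatible families in the product of all finite quotients. -/
def profCompat (G : Type*) [Group G] : Subgroup (Π N : FinQuot G, G ⧸ N.1) where
  carrier := {x | ∀ (N M : FinQuot G) (h : N.1 ≤ M.1),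
    QuotientGroup.map N.1 M.1 (MonoidHom.id G) (by simpa using h) (x N) = x M}
  one_mem' := by intro N M h; simp
  mul_mem' := by
    intro a b ha hb N M h
    simp only [Pi.mul_apply, map_mul, ha N M h, hb N M h]
  inv_mem' := by
    intro a ha N M h
    simp only [Pi.inv_apply, map_inv, ha N M h]

/-- The profinite completion of a group, as the inverse limit of its finite quotients. -/
def ProfComp (G : Type*) [Group G] : Type _ := profCompat G

instance {G : Type*} [Group G] : Group (ProfComp G) :=
  inferInstanceAs (Group (profCompat G))

instance {G : Type*} [Group G] : TopologicalSpace (ProfComp G) :=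
  inferInstanceAs (TopologicalSpace {x : Π N : FinQuot G, G ⧸ N.1 // x ∈ profCompat G})

/-- The canonical map from a group to its profinite completion. -/
def toProf (G : Type*) [Group G] : G →* ProfComp G where
  toFun g := ⟨fun N => QuotientGroup.mk g, by
    intro N M h
    simp [QuotientGroup.map_mk]⟩
  map_one' := by apply Subtype.ext; funext N; rfl
  map_mul' a b := by apply Subtype.ext; funext N; rfl

/-- The pullback of a finite-index normal subgroup along a homomorphism. -/
def pullFQ {Λ Γ : Type*} [Group Λ] [Group Γ] (φ : Λ →* Γ) (N : FinQuot Γ) : FinQuot Λ :=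
  ⟨N.1.comap φ, N.2.1.comap φ, ⟨by
    refine ne_zero_of_dvd_ne_zero N.2.2.index_ne_zero ?_
    rw [Subgroup.index_comap]
    exact Subgroup.relIndex_dvd_index_of_normal N.1 φ.range⟩⟩

/-- The induced homomorphism between profinite completions. -/
def profMap {Λ Γ : Type*} [Group Λ] [Group Γ] (φ : Λ →* Γ) :
    ProfComp Λ →* ProfComp Γ where
  toFun x := ⟨fun N => QuotientGroup.map (pullFQ φ N).1 N.1 φ le_rfl (x.1 (pullFQ φ N)), by
    intro N M h
    obtain ⟨g, hg⟩ := QuotientGroup.mk_surjective (x.1 (pullFQ φ N))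
    have hx := x.2 (pullFQ φ N) (pullFQ φ M) (Subgroup.comap_mono h)
    show QuotientGroup.map _ _ _ _
        (QuotientGroup.map _ _ φ _ (x.1 (pullFQ φ N))) =
      QuotientGroup.map _ _ φ _ (x.1 (pullFQ φ M))
    rw [← hx, ← hg]
    rfl⟩
  map_one' := by
    apply Subtype.ext
    funext N
    show QuotientGroup.map _ _ φ _ ((1 : ProfComp Λ).1 (pullFQ φ N)) = _
    rw [show ((1 : ProfComp Λ).1 (pullFQ φ N)) = 1 from rfl, map_one]
    rfl
  map_mul' a b := by
    apply Subtype.ext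
    funext N
    show QuotientGroup.map _ _ _ _ ((a * b).1 (pullFQ φ N)) = _
    have : (a * b).1 (pullFQ φ N) = a.1 (pullFQ φ N) * b.1 (pullFQ φ N) := rfl
    rw [this, map_mul]
    rfl

/-- A group is residually finite if every nontrivial element survives in some finite
quotient. -/
def ResiduallyFinite (G : Type*) [Group G] : Prop :=
  ∀ g : G, g ≠ 1 → ∃ N : Subgroup G, N.Normal ∧ N.FiniteIndex ∧ g ∉ N

/-! Let `K = ker τ`, so that `Γ = φ(Λ) ⋉ K`. Surjectivity of the induced map of profinite
completions says that `φ(Λ)` is dense in the profinite topology: it surjects onto every finite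
quotient of `Γ`. Given `k ∈ K` and a finite-index normal subgroup `N`, write `k = φ(l) m` with
`m ∈ N ∩ (φ ∘ τ)⁻¹(N)`; applying `τ` gives `l = τ(m)⁻¹`, so `φ(l) ∈ N` and hence `k ∈ N`.
Thus `K` lies in every finite-index normal subgroup, and residual finiteness of `Γ` forces
`K = 1`, i.e. `φ ∘ τ = id`. -/

def FinQuot.inf {G : Type*} [Group G] (N M : FinQuot G) : FinQuot G :=
  ⟨N.1 ⊓ M.1, Subgroup.normal_inf_normal N.1 M.1, inferInstance⟩

lemma ResiduallyFinite.eq_one_of_forall_mem {G : Type*} [Group G] (hG : ResiduallyFinite G)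
    {g : G} (hg : ∀ N : FinQuot G, g ∈ N.1) : g = 1 := by
  by_contra hne
  obtain ⟨N, hN, hfin, hgN⟩ := hG g hne
  exact hgN (hg ⟨N, hN, hfin⟩)

lemma exists_mk_map_eq_of_surjective_profMap {Λ Γ : Type*} [Group Λ] [Group Γ] {φ : Λ →* Γ}
    (hsurj : Function.Surjective (profMap φ)) (N : FinQuot Γ) (γ : Γ) :
    ∃ l : Λ, (QuotientGroup.mk (φ l) : Γ ⧸ N.1) = QuotientGroup.mk γ := by
  obtain ⟨y, hy⟩ := hsurj (toProf Γ γ)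
  obtain ⟨l, hl⟩ := QuotientGroup.mk_surjective (y.1 (pullFQ φ N))
  refine ⟨l, ?_⟩
  have hN : QuotientGroup.map (pullFQ φ N).1 N.1 φ le_rfl (y.1 (pullFQ φ N)) =
      (QuotientGroup.mk γ : Γ ⧸ N.1) :=
    congrArg (fun x : ProfComp Γ => x.1 N) hy
  rw [← hl] at hN
  exact (QuotientGroup.map_mk _ _ _ _ l).symm.trans hN

lemma ker_le_of_surjective_profMap {Λ Γ : Type*} [Group Λ] [Group Γ] {φ : Λ →* Γ}
    {τ : Γ →* Λ} (hsurj : Function.Surjective (profMap φ)) (hretr : Function.LeftInverse τ φ)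
    (N : FinQuot Γ) : τ.ker ≤ N.1 := by
  intro k hk
  obtain ⟨l, hl⟩ := exists_mk_map_eq_of_surjective_profMap hsurj (N.inf (pullFQ (φ.comp τ) N)) k
  obtain ⟨hmN, hmτ⟩ := QuotientGroup.eq.mp hl
  have hk_eq : k = φ l * ((φ l)⁻¹ * k) := (mul_inv_cancel_left _ _).symm
  have hl_eq : l = (τ ((φ l)⁻¹ * k))⁻¹ := by
    refine eq_inv_of_mul_eq_one_left ?_
    rw [← MonoidHom.mem_ker.mp hk, map_mul, map_inv, hretr, mul_inv_cancel_left]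
  have hφl : φ l ∈ N.1 := by
    rw [hl_eq, map_inv]
    exact N.1.inv_mem hmτ
  rw [hk_eq]
  exact N.1.mul_mem hφl hmN

theorem grothendieckPair_retract_isIso_general {Λ Γ : Type*} [Group Λ] [Group Γ]
    (hΓrf : ResiduallyFinite Γ)
    (φ : Λ →* Γ)
    (hGP : Function.Bijective (profMap φ))
    (τ : Γ →* Λ) (hretr : τ.comp φ = MonoidHom.id Λ) :
    Function.Bijective φ := by
  have hleft : Function.LeftInverse τ φ := DFunLike.congr_fun hretr
  have hτinj : Function.Injective τ := (injective_iff_map_eq_one τ).mpr fun _ hk =>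
    hΓrf.eq_one_of_forall_mem fun N => ker_le_of_surjective_profMap hGP.2 hleft N hk
  exact ⟨hleft.injective, (hleft.rightInverse_of_injective hτinj).surjective⟩

/-- If `φ : Λ → Γ` is a Grothendieck pair (an injection of finitely generated
residually finite groups inducing an isomorphism of profinite completions) and `Λ` is a
retract of `Γ` via `φ`, then `φ` is an isomorphism. -/
theorem grothendieckPair_retract_isIso {Λ Γ : Type*} [Group Λ] [Group Γ]
    (hΛfg : Group.FG Λ) (hΓfg : Group.FG Γ)
    (hΛrf : ResiduallyFinite Λ) (hΓrf : ResiduallyFinite Γ)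
    (φ : Λ →* Γ) (hφinj : Function.Injective φ)
    (hGP : Function.Bijective (profMap φ))
    (τ : Γ →* Λ) (hretr : τ.comp φ = MonoidHom.id Λ) :
    Function.Bijective φ :=
  grothendieckPair_retract_isIso_general hΓrf φ hGP τ hretr
end

section
/- Let Γ be a finitely generated residually finite group in which every finitely generated subgroup is closed in the profinite topology (i.e., Γ is LERF). Then every Grothendieck pair φ: Λ → Γ with Λ finitely generated is trivial, i.e., φ is surjective. -/
/- Proof idea: the image of `φ` is a finitely generated subgroup, so if it were proper, LERF would
put it inside a finite-index subgroup `K` missing some `γ`. In the finite quotient by the normal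
core of `K`, every element in the image of `profMap φ` comes from `φ`, hence from `K`, so the image
of `γ` in the profinite completion is not hit and `profMap φ` is not surjective. -/

section

variable {Λ Γ : Type*} [Group Λ] [Group Γ]

theorem exists_profMap_val_eq_mk (φ : Λ →* Γ) (x : ProfComp Λ) (N : FinQuot Γ) :
    ∃ l : Λ, (profMap φ x).1 N = QuotientGroup.mk (φ l) := by
  obtain ⟨l, hl⟩ := QuotientGroup.mk_surjective (x.1 (pullFQ φ N))
  refine ⟨l, ?_⟩
  change QuotientGroup.map _ _ φ le_rfl (x.1 (pullFQ φ N)) = _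
  rw [← hl]
  rfl

theorem profMap_ne_toProf_of_range_le {φ : Λ →* Γ} {K : Subgroup Γ} [K.FiniteIndex]
    (hφK : φ.range ≤ K) {γ : Γ} (hγK : γ ∉ K) (x : ProfComp Λ) :
    profMap φ x ≠ toProf Γ γ := by
  intro hx
  let N : FinQuot Γ :=
    ⟨K.normalCore, Subgroup.normalCore_normal K, Subgroup.finiteIndex_normalCore K⟩
  obtain ⟨l, hl⟩ := exists_profMap_val_eq_mk φ x N
  have hmod : (QuotientGroup.mk (φ l) : Γ ⧸ N.1) = QuotientGroup.mk γ := by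
    rw [← hl, hx]
    rfl
  have hdiff : (φ l)⁻¹ * γ ∈ K := K.normalCore_le (QuotientGroup.eq.1 hmod)
  have hφl : φ l ∈ K := hφK ⟨l, rfl⟩
  exact hγK (by simpa using K.mul_mem hφl hdiff)

end

theorem Subgroup.exists_finiteIndex_le_notMem_of_eq_sInf {G : Type*} [Group G]
    {H : Subgroup G} {S : Set (Subgroup G)} (hS : ∀ K ∈ S, K.FiniteIndex) (hH : H = sInf S)
    {g : G} (hg : g ∉ H) : ∃ K : Subgroup G, K.FiniteIndex ∧ H ≤ K ∧ g ∉ K := by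
  subst hH
  obtain ⟨K, hKS, hgK⟩ : ∃ K ∈ S, g ∉ K := by
    simpa only [Subgroup.mem_sInf, not_forall, exists_prop] using hg
  exact ⟨K, hS K hKS, sInf_le hKS, hgK⟩

theorem lerf_right_grothendieck_rigid_general {Γ : Type*} [Group Γ]
    (hLERF : ∀ H : Subgroup Γ, H.FG → ∃ S : Set (Subgroup Γ),
      (∀ K ∈ S, K.FiniteIndex) ∧ H = sInf S) :
    ∀ (Λ : Type*) [Group Λ], ∀ (φ : Λ →* Γ), Group.FG Λ → ResiduallyFinite Λ →
      Function.Injective φ → Function.Bijective (profMap φ) →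
      Function.Surjective φ := by
  intro Λ _ φ hΛfg _ _ hbij
  by_contra hns
  obtain ⟨γ, hγ⟩ : ∃ γ : Γ, γ ∉ φ.range := by
    simpa only [Function.Surjective, not_forall, MonoidHom.mem_range] using hns
  have hrange_fg : φ.range.FG := (Group.fg_iff_subgroup_fg φ.range).1 (Group.fg_range φ)
  obtain ⟨S, hS, hrange⟩ := hLERF φ.range hrange_fg
  obtain ⟨K, hK, hφK, hγK⟩ := Subgroup.exists_finiteIndex_le_notMem_of_eq_sInf hS hrange hγ
  obtain ⟨x, hx⟩ := hbij.2 (toProf Γ γ)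
  exact profMap_ne_toProf_of_range_le hφK hγK x hx

/-- If `Γ` is a finitely generated residually finite LERF group (every finitely
generated subgroup is an intersection of finite-index subgroups), then every
Grothendieck pair `φ : Λ → Γ` is trivial, i.e. `φ` is surjective. -/
theorem lerf_right_grothendieck_rigid {Γ : Type*} [Group Γ]
    (hΓfg : Group.FG Γ) (hΓrf : ResiduallyFinite Γ)
    (hLERF : ∀ H : Subgroup Γ, H.FG → ∃ S : Set (Subgroup Γ),
      (∀ K ∈ S, K.FiniteIndex) ∧ H = sInf S) :
    ∀ (Λ : Type*) [Group Λ], ∀ (φ : Λ →* Γ), Group.FG Λ → ResiduallyFinite Λ →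
      Function.Injective φ → Function.Bijective (profMap φ) →
      Function.Surjective φ :=
  lerf_right_grothendieck_rigid_general hLERF
end

section
/- Let φ: Λ → Γ be an injection of finitely generated residually finite groups inducing an isomorphism on profinite completions. If G is a group such that precomposition with φ gives a bijection Hom(Γ, G) → Hom(Λ, G), and H ≤ G has finite index, then precomposition with φ gives an injection Hom(Γ, H) → Hom(Λ, H), and moreover every homomorphism Λ → H extends to a homomorphism Γ → H (surjectivity), using that the image of Λ is dense in the profinite topology of the image of the extension. -/
/-!
Injectivity passes from `Hom(Γ, G)` to `Hom(Γ, H)` because `H ↪ G` is injective. For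
extension, extend `ψ : Λ → H ≤ G` to `τ : Γ → G`. The preimage `τ⁻¹(H)` has finite index and
contains `φ(Λ)`; surjectivity of `φ̂` on profinite completions means `φ(Λ)` maps onto every
finite quotient of `Γ`, in particular onto `Γ / core(τ⁻¹(H))`, so `τ⁻¹(H) = Γ`.
-/

instance Subgroup.finiteIndex_comap {G G' : Type*} [Group G] [Group G'] (H : Subgroup G)
    [H.FiniteIndex] (f : G' →* G) : (H.comap f).FiniteIndex :=
  ⟨by
    rw [Subgroup.index_comap]
    exact (H.isFiniteRelIndex_of_finiteIndex (K := f.range)).relIndex_ne_zero⟩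

section GrothendieckPair

variable {Λ Γ : Type*} [Group Λ] [Group Γ] {φ : Λ →* Γ}

theorem surjective_mk_comp_of_surjective_profMap (hφ : Function.Surjective (profMap φ))
    (N : FinQuot Γ) : Function.Surjective ((QuotientGroup.mk' N.1).comp φ) := by
  intro q
  obtain ⟨γ, rfl⟩ := QuotientGroup.mk_surjective q
  obtain ⟨x, hx⟩ := hφ (toProf Γ γ)
  obtain ⟨l, hl⟩ := QuotientGroup.mk_surjective (x.1 (pullFQ φ N))
  have hN : (profMap φ x).1 N = (toProf Γ γ).1 N := by rw [hx]
  refine ⟨l, ?_⟩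
  change QuotientGroup.map _ _ φ le_rfl (x.1 (pullFQ φ N)) = _ at hN
  rw [← hl] at hN
  exact hN

theorem eq_top_of_range_le_of_surjective_profMap (hφ : Function.Surjective (profMap φ))
    {K : Subgroup Γ} [K.FiniteIndex] (hK : φ.range ≤ K) : K = ⊤ := by
  refine eq_top_iff.2 fun γ _ => ?_
  obtain ⟨l, hl⟩ :=
    surjective_mk_comp_of_surjective_profMap hφ ⟨K.normalCore, inferInstance, inferInstance⟩ γ
  have hγ : (φ l)⁻¹ * γ ∈ K := K.normalCore_le (QuotientGroup.eq.1 hl)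
  simpa using K.mul_mem (hK ⟨l, rfl⟩) hγ

variable {G : Type*} [Group G]

theorem Subgroup.injective_comp_of_injective_comp (H : Subgroup G)
    (hG : Function.Injective fun τ : Γ →* G => τ.comp φ) :
    Function.Injective fun τ : Γ →* H => τ.comp φ := by
  intro τ₁ τ₂ h
  have h' : (H.subtype.comp τ₁).comp φ = (H.subtype.comp τ₂).comp φ := by
    simp only [MonoidHom.comp_assoc] at h ⊢
    rw [h]
  exact MonoidHom.ext fun γ => Subtype.ext (DFunLike.congr_fun (hG h') γ)

theorem Subgroup.exists_comp_eq_of_surjective_comp (hφ : Function.Surjective (profMap φ))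
    (H : Subgroup G) [H.FiniteIndex] (hG : Function.Surjective fun τ : Γ →* G => τ.comp φ)
    (ψ : Λ →* H) : ∃ τ : Γ →* H, τ.comp φ = ψ := by
  obtain ⟨τ, hτ⟩ := hG (H.subtype.comp ψ)
  have hτφ (l : Λ) : τ (φ l) = ψ l := DFunLike.congr_fun hτ l
  have hτH : H.comap τ = ⊤ := by
    refine eq_top_of_range_le_of_surjective_profMap hφ ?_
    rintro _ ⟨l, rfl⟩
    simp [hτφ]
  refine ⟨τ.codRestrict H fun γ => (H.comap τ).eq_top_iff'.1 hτH γ, ?_⟩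
  ext l
  exact hτφ l

end GrothendieckPair

theorem grothendieckPair_finiteIndex_subgroup_general {Λ Γ G : Type*} [Group Λ] [Group Γ]
    [Group G] (φ : Λ →* Γ)
    (hGP : Function.Bijective (profMap φ))
    (hG : Function.Bijective fun τ : Γ →* G => τ.comp φ)
    (H : Subgroup G) (hH : H.FiniteIndex) :
    Function.Injective (fun τ : Γ →* H => τ.comp φ) ∧
    ∀ ψ : Λ →* H, ∃ τ : Γ →* H, τ.comp φ = ψ :=
  ⟨H.injective_comp_of_injective_comp hG.1, H.exists_comp_eq_of_surjective_comp hGP.2 hG.2⟩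

/-- Let `φ : Λ → Γ` be a Grothendieck pair and `G` a group for which precomposition
with `φ` is a bijection `Hom(Γ, G) → Hom(Λ, G)`.  Then for every finite-index subgroup
`H ≤ G`, precomposition with `φ` is injective on `Hom(Γ, H)` and every homomorphism
`Λ → H` extends to a homomorphism `Γ → H`. -/
theorem grothendieckPair_finiteIndex_subgroup {Λ Γ G : Type*} [Group Λ] [Group Γ]
    [Group G] (hΛfg : Group.FG Λ) (hΓfg : Group.FG Γ)
    (hΛrf : ResiduallyFinite Λ) (hΓrf : ResiduallyFinite Γ)
    (φ : Λ →* Γ) (hφinj : Function.Injective φ)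
    (hGP : Function.Bijective (profMap φ))
    (hG : Function.Bijective fun τ : Γ →* G => τ.comp φ)
    (H : Subgroup G) (hH : H.FiniteIndex) :
    Function.Injective (fun τ : Γ →* H => τ.comp φ) ∧
    ∀ ψ : Λ →* H, ∃ τ : Γ →* H, τ.comp φ = ψ :=
  grothendieckPair_finiteIndex_subgroup_general φ hGP hG H hH
end

section
/- Let G be a group, φ: Λ → Γ a group homomorphism whose image together with a subgroup Γ₁ ≤ Γ generates Γ (i.e., Γ = Γ₁·φ(Λ)), with Γ₁ ∩ φ(Λ) = φ(Λ₁) for a subgroup Λ₁ ≤ Λ. Given homomorphisms τ₁: Γ₁ → G and ψ: Λ → G agreeing on Λ₁ (i.e., τ₁ restricted to φ(Λ₁) equals ψ on Λ₁), and such that for every b ∈ Λ the two maps Γ₁ → G given by a ↦ ψ(b)τ₁(a)ψ(b)⁻¹ and a ↦ τ₁(φ(b) a φ(b)⁻¹) coincide (assuming Γ₁ is normalized by φ(Λ)), the map τ(a·φ(b)) := τ₁(a)ψ(b) is a well-defined group homomorphism Γ → G extending both. -/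
/-- Grothendieck's gluing lemma: let `Γ₁` be a normal subgroup of `Γ` with
`Γ = Γ₁ ⬝ φ(Λ)` and `Λ₁ = φ⁻¹(Γ₁)`.  Given `τ₁ : Γ₁ → G` and `ψ : Λ → G` agreeing on
`Λ₁` and compatible with conjugation, the formula `τ(a·φ(b)) = τ₁(a)ψ(b)` defines a
group homomorphism `Γ → G` extending both. -/
theorem glue_homomorphism {Λ Γ G : Type*} [Group Λ] [Group Γ] [Group G]
    (φ : Λ →* Γ) (Γ₁ : Subgroup Γ) (hΓ₁ : Γ₁.Normal)
    (hgen : ∀ g : Γ, ∃ a : Γ₁, ∃ b : Λ, g = (a : Γ) * φ b)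
    (τ₁ : Γ₁ →* G) (ψ : Λ →* G)
    (hagree : ∀ (b : Λ) (hb : φ b ∈ Γ₁), τ₁ ⟨φ b, hb⟩ = ψ b)
    (hconj : ∀ (b : Λ) (a : Γ₁),
      ψ b * τ₁ a * (ψ b)⁻¹ = τ₁ ⟨φ b * (a : Γ) * (φ b)⁻¹, by
        simpa using hΓ₁.conj_mem a a.2 (φ b)⟩) :
    ∃ τ : Γ →* G, ∀ (a : Γ₁) (b : Λ), τ ((a : Γ) * φ b) = τ₁ a * ψ b := by
  -- well-definedness
  have wd : ∀ (a a' : Γ₁) (b b' : Λ), (a : Γ) * φ b = (a' : Γ) * φ b' →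
      τ₁ a * ψ b = τ₁ a' * ψ b' := by
    intro a a' b b' h
    have hmem : φ (b' * b⁻¹) ∈ Γ₁ := by
      have : φ (b' * b⁻¹) = (a'⁻¹ * a : Γ₁) := by
        push_cast
        rw [map_mul, map_inv]
        rw [eq_comm, inv_mul_eq_iff_eq_mul, ← mul_assoc]
        exact (eq_mul_inv_iff_mul_eq.mpr h)
      rw [this]; exact (a'⁻¹ * a).2
    have hval : (⟨φ (b' * b⁻¹), hmem⟩ : Γ₁) = a'⁻¹ * a := by
      ext
      push_cast
      rw [map_mul, map_inv]
      rw [eq_comm, inv_mul_eq_iff_eq_mul, ← mul_assoc]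
      exact (eq_mul_inv_iff_mul_eq.mpr h)
    have := hagree (b' * b⁻¹) hmem
    rw [hval, map_mul, map_mul, map_inv, map_inv] at this
    -- this : τ₁ a'⁻¹ * τ₁ a = ψ b' * (ψ b)⁻¹
    have h2 : τ₁ a = τ₁ a' * (ψ b' * (ψ b)⁻¹) := by
      rw [← this]; group
    rw [h2]; group
  choose A B hAB using hgen
  set f : Γ → G := fun g => τ₁ (A g) * ψ (B g) with hf
  have key : ∀ (a : Γ₁) (b : Λ), f ((a : Γ) * φ b) = τ₁ a * ψ b := by
    intro a b
    exact (wd _ a _ b (hAB _).symm)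
  have hmul : ∀ x y : Γ, f (x * y) = f x * f y := by
    intro x y
    have hx := hAB x
    have hy := hAB y
    have hmem : φ (B x) * (A y : Γ) * (φ (B x))⁻¹ ∈ Γ₁ := by
      simpa using hΓ₁.conj_mem _ (A y).2 (φ (B x))
    have hxy : x * y = ((A x * ⟨_, hmem⟩ : Γ₁) : Γ) * φ (B x * B y) := by
      conv_lhs => rw [hx, hy]
      push_cast; rw [map_mul]; group
    rw [hxy, key]
    show _ = (τ₁ (A x) * ψ (B x)) * (τ₁ (A y) * ψ (B y))
    rw [map_mul, map_mul, ← hconj (B x) (A y)]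
    group
  exact ⟨MonoidHom.mk' f hmul, key⟩
end

section
/- Let F̂ be a topologically finitely generated profinite group and α̂: F̂ → F̂ a continuous endomorphism. Then the restriction of α̂ to P = ⋂_{n∈ℕ} α̂ⁿ(F̂) is a surjective (hence bijective) continuous endomorphism of P. -/
/-!
`α` maps `P = ⋂ₙ αⁿ(G)` into itself.  Onto: the fibre of `α` over a point of `P` meets every
`αⁿ(G)`; these are compact and decreasing, so the fibre meets `P`.  One-to-one: as `G` is
finitely generated, there are only finitely many homomorphisms with open kernel from `G` to the
finite group `G ⧸ N`, and precomposition with `α` preserves this family, so the intersection `V`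
of their kernels is an open normal subgroup inside `N` with `α(V) ⊆ V`.  On the finite quotient
`G ⧸ V` the iterated images stabilise and the induced map is a bijection of the stable image.
Hence `α x = α y` with `x, y ∈ P` forces `x ≡ y` modulo every open normal subgroup, which in a
profinite group means `x = y`.
-/

open Function Set

section Iterate

variable {α β : Type*}

theorem antitone_range_iterate (f : α → α) : Antitone fun n : ℕ => range f^[n] :=
  antitone_nat_of_succ_le fun n => by
    rw [iterate_succ]
    exact range_comp_subset_range _ _

theorem Set.mapsTo_iInter_range_iterate (f : α → α) :
    MapsTo f (⋂ n : ℕ, range f^[n]) (⋂ n : ℕ, range f^[n]) := fun x hx =>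
  mem_iInter.2 fun n => by
    obtain ⟨y, rfl⟩ := mem_iInter.1 hx n
    exact ⟨f y, (Commute.iterate_self f n).eq y⟩

theorem Function.Semiconj.mapsTo_iInter_range_iterate {π : α → β} {f : α → α} {g : β → β}
    (h : Semiconj π f g) : MapsTo π (⋂ n : ℕ, range f^[n]) (⋂ n : ℕ, range g^[n]) :=
  fun x hx => mem_iInter.2 fun n => by
    obtain ⟨y, rfl⟩ := mem_iInter.1 hx n
    exact ⟨π y, (h.iterate_right n y).symm⟩

theorem Finite.injOn_iInter_range_iterate [Finite α] (f : α → α) :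
    InjOn f (⋂ n : ℕ, range f^[n]) := by
  obtain ⟨m, hm⟩ := WellFoundedLT.antitone_chain_condition (antitone_range_iterate f)
  have himage : f '' range f^[m] = range f^[m] := by
    rw [← range_comp, ← iterate_succ', ← hm (m + 1) m.le_succ]
  have hbij : BijOn f (range f^[m]) (range f^[m]) :=
    ((toFinite _).surjOn_iff_bijOn_of_mapsTo (mapsTo_iff_image_subset.2 himage.subset)).1
      himage.superset
  exact hbij.injOn.mono (iInter_subset _ m)

theorem Continuous.surjOn_iInter_range_iterate {X : Type*} [TopologicalSpace X] [CompactSpace X]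
    [T2Space X] {f : X → X} (hf : Continuous f) :
    SurjOn f (⋂ n : ℕ, range f^[n]) (⋂ n : ℕ, range f^[n]) := by
  intro y hy
  let C : ℕ → Set X := fun n => f ⁻¹' {y} ∩ range f^[n]
  have hclosed : ∀ n, IsClosed (C n) := fun n =>
    (isClosed_singleton.preimage hf).inter (isCompact_range (hf.iterate n)).isClosed
  have hnonempty : ∀ n, (C n).Nonempty := fun n => by
    obtain ⟨x, hx⟩ := mem_iInter.1 hy (n + 1)
    exact ⟨f^[n] x, by rw [mem_preimage, ← iterate_succ_apply' f n x, hx]; rfl, x, rfl⟩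
  obtain ⟨x, hx⟩ := IsCompact.nonempty_iInter_of_sequence_nonempty_isCompact_isClosed C
    (fun n => inter_subset_inter_right _ (antitone_range_iterate f n.le_succ)) hnonempty
    (hclosed 0).isCompact hclosed
  rw [mem_iInter] at hx
  exact ⟨x, mem_iInter.2 fun n => (hx n).2, (hx 0).1⟩

end Iterate

section Group

variable {G M : Type*} [Group G] [Group M]

theorem QuotientGroup.mk_eq_of_mem_iInter_range_iterate {V : Subgroup G} [V.Normal]
    [Finite (G ⧸ V)] {α : G →* G} (hV : V ≤ V.comap α) {x y : G}
    (hx : x ∈ ⋂ n : ℕ, range (⇑α)^[n]) (hy : y ∈ ⋂ n : ℕ, range (⇑α)^[n]) (hxy : α x = α y) :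
    (x : G ⧸ V) = y := by
  let β := QuotientGroup.map V V α hV
  have hsemiconj : Semiconj ((↑) : G → G ⧸ V) α β := fun z =>
    (QuotientGroup.map_mk V V α hV z).symm
  refine Finite.injOn_iInter_range_iterate β (hsemiconj.mapsTo_iInter_range_iterate hx)
    (hsemiconj.mapsTo_iInter_range_iterate hy) ?_
  rw [← hsemiconj x, ← hsemiconj y, hxy]

variable [TopologicalSpace G] [IsTopologicalGroup G]

theorem MonoidHom.eq_of_eqOn_of_isOpen_ker {s : Set G}
    (hs : Dense (Subgroup.closure s : Set G)) {f g : G →* M} (hf : IsOpen (f.ker : Set G))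
    (hg : IsOpen (g.ker : Set G)) (h : EqOn f g s) : f = g := by
  have hopen : IsOpen (f.eqLocus g : Set G) :=
    Subgroup.isOpen_mono (H₁ := f.ker ⊓ g.ker) (fun x hx => by
      rw [Subgroup.mem_inf, MonoidHom.mem_ker, MonoidHom.mem_ker] at hx
      exact hx.1.trans hx.2.symm) (hf.inter hg)
  have hle : (Subgroup.closure s : Set G) ⊆ f.eqLocus g := (Subgroup.closure_le _).2 h
  ext x
  exact (Subgroup.isClosed_of_isOpen _ hopen).closure_subset_iff.2 hle (hs x)

theorem MonoidHom.finite_setOf_isOpen_ker [Finite M] {s : Set G} (hs_fin : s.Finite)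
    (hs : Dense (Subgroup.closure s : Set G)) :
    {f : G →* M | IsOpen (f.ker : Set G)}.Finite := by
  have := hs_fin.to_subtype
  rw [← finite_coe_iff]
  refine Finite.of_injective (fun f (x : s) => f.1 x) fun f g hfg => Subtype.ext ?_
  exact MonoidHom.eq_of_eqOn_of_isOpen_ker hs f.2 g.2 fun x hx => congrFun hfg ⟨x, hx⟩

variable [CompactSpace G]

theorem OpenNormalSubgroup.exists_le_comap_le {s : Set G} (hs_fin : s.Finite)
    (hs : Dense (Subgroup.closure s : Set G)) {α : G →* G} (hα : Continuous α)
    (N : OpenNormalSubgroup G) :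
    ∃ V : OpenNormalSubgroup G, V ≤ N ∧ V.toSubgroup ≤ V.toSubgroup.comap α := by
  have := N.toSubgroup.quotient_finite_of_isOpen N.isOpen
  let F := {f : G →* G ⧸ N.toSubgroup | IsOpen (f.ker : Set G)}
  have := (MonoidHom.finite_setOf_isOpen_ker (M := G ⧸ N.toSubgroup) hs_fin hs).to_subtype
  let V : Subgroup G := ⨅ f : F, f.1.ker
  have hVopen : IsOpen (V : Set G) := by
    rw [Subgroup.coe_iInf]
    exact isOpen_iInter_of_finite fun f => f.2
  have hmk : QuotientGroup.mk' N.toSubgroup ∈ F :=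
    show IsOpen ((QuotientGroup.mk' N.toSubgroup).ker : Set G) by
      rw [QuotientGroup.ker_mk']
      exact N.isOpen
  refine ⟨⟨⟨V, hVopen⟩, Subgroup.normal_iInf_normal fun f => f.1.normal_ker⟩, fun x hx => ?_,
    fun x hx => Subgroup.mem_iInf.2 fun f => ?_⟩
  · exact (QuotientGroup.ker_mk' N.toSubgroup).le (Subgroup.mem_iInf.1 hx ⟨_, hmk⟩)
  · have hcomp : f.1.comp α ∈ F :=
      show IsOpen ((f.1.comp α).ker : Set G) by
        rw [← MonoidHom.comap_ker, Subgroup.coe_comap]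
        exact f.2.preimage hα
    exact Subgroup.mem_iInf.1 hx ⟨_, hcomp⟩

end Group

section Profinite

variable {G : Type*} [Group G] [TopologicalSpace G] [IsTopologicalGroup G] [CompactSpace G]
  [TotallyDisconnectedSpace G]

theorem ProfiniteGrp.eq_one_of_forall_mem_openNormalSubgroup {g : G}
    (h : ∀ N : OpenNormalSubgroup G, g ∈ N) : g = 1 := by
  by_contra hg
  obtain ⟨N, hN⟩ := ProfiniteGrp.exist_openNormalSubgroup_sub_open_nhds_of_one
    (isOpen_compl_singleton (x := g)) (Ne.symm hg)
  exact hN (h N) rfl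

theorem MonoidHom.injOn_iInter_range_iterate_of_profinite {s : Set G} (hs_fin : s.Finite)
    (hs : Dense (Subgroup.closure s : Set G)) {α : G →* G} (hα : Continuous α) :
    InjOn α (⋂ n : ℕ, Set.range (⇑α)^[n]) := by
  intro x hx y hy hxy
  rw [← inv_mul_eq_one]
  refine ProfiniteGrp.eq_one_of_forall_mem_openNormalSubgroup fun N => ?_
  obtain ⟨V, hVN, hV⟩ := N.exists_le_comap_le hs_fin hs hα
  have := V.toSubgroup.quotient_finite_of_isOpen V.isOpen
  exact hVN (QuotientGroup.eq.1 (QuotientGroup.mk_eq_of_mem_iInter_range_iterate hV hx hy hxy))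

end Profinite

theorem eventualImage_bijOn_of_profinite_general (G : Type*) [Group G] [TopologicalSpace G]
    [IsTopologicalGroup G] [CompactSpace G] [TotallyDisconnectedSpace G]
    (htfg : ∃ S : Finset G, closure ((Subgroup.closure (S : Set G) : Subgroup G) : Set G)
      = Set.univ)
    (α : G →* G) (hα : Continuous α) :
    Set.BijOn ⇑α (⋂ n : ℕ, Set.range (⇑α)^[n]) (⋂ n : ℕ, Set.range (⇑α)^[n]) := by
  obtain ⟨S, hS⟩ := htfg
  exact ⟨mapsTo_iInter_range_iterate α,
    α.injOn_iInter_range_iterate_of_profinite S.finite_toSet (dense_iff_closure_eq.2 hS) hα,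
    hα.surjOn_iInter_range_iterate⟩

/-- Let `G` be a topologically finitely generated profinite group and `α : G → G` a
continuous endomorphism.  Then `α` restricts to a bijection of the eventual image
`P = ⋂ₙ αⁿ(G)` onto itself. -/
theorem eventualImage_bijOn_of_profinite (G : Type*) [Group G] [TopologicalSpace G]
    [IsTopologicalGroup G] [CompactSpace G] [T2Space G] [TotallyDisconnectedSpace G]
    (htfg : ∃ S : Finset G, closure ((Subgroup.closure (S : Set G) : Subgroup G) : Set G)
      = Set.univ)
    (α : G →* G) (hα : Continuous α) :
    Set.BijOn ⇑α (⋂ n : ℕ, Set.range (⇑α)^[n]) (⋂ n : ℕ, Set.range (⇑α)^[n]) :=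
  eventualImage_bijOn_of_profinite_general G htfg α hα
end

section
/- Let F be a finitely generated free group, α: F → F an injective endomorphism, H ≤ F a finitely generated α-invariant subgroup, and w ∈ F. If there exists n ∈ ℕ with αⁿ(w) ∈ H, then the image of w in the profinite completion of the ascending HNN extension M_α lies in the closure of the image of H. -/
/-- The mapping torus (ascending HNN extension) of an injective endomorphism `α` of a
group `G`: `⟨G, t ∣ t⁻¹ g t = α g⟩`, realized as the HNN extension of `G` along the
isomorphism `G ≃ α.range`. -/
noncomputable def MappingTorus {G : Type*} [Group G] (α : G →* G)
    (hα : Function.Injective ⇑α) : Type _ :=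
  HNNExtension G ⊤ α.range (Subgroup.topEquiv.trans (MonoidHom.ofInjective hα))

noncomputable instance {G : Type*} [Group G] (α : G →* G) (hα : Function.Injective ⇑α) :
    Group (MappingTorus α hα) :=
  inferInstanceAs (Group (HNNExtension G ⊤ α.range
    (Subgroup.topEquiv.trans (MonoidHom.ofInjective hα))))

/-- The canonical embedding of the base group into the mapping torus. -/
noncomputable def MappingTorus.of {G : Type*} [Group G] (α : G →* G)
    (hα : Function.Injective ⇑α) : G →* MappingTorus α hα :=
  HNNExtension.of

/-- The stable letter of the mapping torus. -/
noncomputable def MappingTorus.t {G : Type*} [Group G] (α : G →* G)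
    (hα : Function.Injective ⇑α) : MappingTorus α hα :=
  HNNExtension.t

/-- The induced endomorphism of the profinite completion, as a monoid endomorphism
(so that it can be iterated). -/
def profEnd {G : Type*} [Group G] (α : G →* G) : Monoid.End (ProfComp G) :=
  profMap α

/-- The eventual image `P = ⋂ₙ α̂ⁿ(Ĝ)` of the induced endomorphism `α̂` of the
profinite completion. -/
def profEventualImage {G : Type*} [Group G] (α : G →* G) : Subgroup (ProfComp G) :=
  ⨅ n : ℕ, Subgroup.map (profEnd α ^ n) ⊤

theorem Subgroup.mem_normalizer_of_conj_mem {G : Type*} [Group G] [Finite G] {S : Subgroup G}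
    {q : G} (hq : ∀ s ∈ S, q * s * q⁻¹ ∈ S) : q ∈ Subgroup.normalizer (S : Set G) := by
  let conj : S → S := fun s => ⟨q * s * q⁻¹, hq s s.2⟩
  have hconj : Function.Surjective conj := Finite.surjective_of_injective fun s s' h => by
    simpa [conj] using congrArg Subtype.val h
  refine Subgroup.mem_normalizer_iff.2 fun g => ⟨hq g, fun hg => ?_⟩
  obtain ⟨s, hs⟩ := hconj ⟨_, hg⟩
  have hsg : (s : G) = g := by simpa [conj] using congrArg Subtype.val hs
  exact hsg ▸ s.2

theorem QuotientGroup.mk_mem_map_of_conj_pow_mem {G : Type*} [Group G] (N : Subgroup G)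
    [N.Normal] [N.FiniteIndex] {K : Subgroup G} {q x : G} (hK : ∀ s ∈ K, q * s * q⁻¹ ∈ K)
    {n : ℕ} (hx : q ^ n * x * (q ^ n)⁻¹ ∈ K) : (x : G ⧸ N) ∈ K.map (QuotientGroup.mk' N) := by
  set π := QuotientGroup.mk' N
  have hq : π q ∈ Subgroup.normalizer (K.map π : Set (G ⧸ N)) := Subgroup.mem_normalizer_of_conj_mem <| by
    rintro _ ⟨s, hs, rfl⟩
    exact ⟨_, hK s hs, by simp⟩
  exact (Subgroup.mem_normalizer_iff.1 (pow_mem hq n) (π x)).2 ⟨_, hx, by simp⟩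

theorem FinQuot.exists_le_of_finset {G : Type*} [Group G] (I : Finset (FinQuot G)) :
    ∃ N : FinQuot G, ∀ M ∈ I, N.1 ≤ M.1 :=
  ⟨⟨⨅ M ∈ I, M.1, Subgroup.normal_iInf_normal fun M => Subgroup.normal_iInf_normal fun _ => M.2.1,
    Subgroup.finiteIndex_iInf' _ fun M _ => M.2.2⟩, fun M hM => iInf₂_le M hM⟩

theorem toProf_mem_closure_range {G α : Type*} [Group G] (f : α → G) (x : G)
    (h : ∀ N : FinQuot G, ∃ a, (f a : G ⧸ N.1) = x) :
    toProf G x ∈ closure (Set.range fun a => toProf G (f a)) := by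
  refine closure_subtype.2 (mem_closure_iff.2 fun V hV hxV => ?_)
  obtain ⟨I, u, hu, hIV⟩ := isOpen_pi_iff.1 hV _ hxV
  obtain ⟨N, hN⟩ := FinQuot.exists_le_of_finset I
  obtain ⟨a, ha⟩ := h N
  refine ⟨_, hIV fun M hM => ?_, ⟨_, ⟨a, rfl⟩, rfl⟩⟩
  have haM : (f a : G ⧸ M.1) = x := QuotientGroup.eq.2 (hN M hM (QuotientGroup.eq.1 ha))
  show (f a : G ⧸ M.1) ∈ u M
  exact haM ▸ (hu M hM).2

namespace MappingTorus

variable {G : Type*} [Group G] (α : G →* G) (hα : Function.Injective α)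

theorem t_mul_of_mul_t_inv (g : G) : t α hα * of α hα g * (t α hα)⁻¹ = of α hα (α g) :=
  (HNNExtension.equiv_eq_conj (φ := Subgroup.topEquiv.trans (MonoidHom.ofInjective hα))
    ⟨g, trivial⟩).symm

theorem t_pow_mul_of_mul_t_pow_inv (n : ℕ) (g : G) :
    t α hα ^ n * of α hα g * (t α hα ^ n)⁻¹ = of α hα (α^[n] g) := by
  induction n with
  | zero => simp
  | succ n ih =>
    rw [pow_succ, Function.iterate_succ_apply', ← t_mul_of_mul_t_inv, ← ih]
    group

end MappingTorus

theorem mem_closure_image_of_iterate_mem_general {ι : Type}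
    (α : FreeGroup ι →* FreeGroup ι) (hα : Function.Injective ⇑α)
    (H : Subgroup (FreeGroup ι)) (hHinv : ∀ h ∈ H, α h ∈ H)
    (w : FreeGroup ι) (hn : ∃ n : ℕ, (⇑α)^[n] w ∈ H) :
    toProf (MappingTorus α hα) (MappingTorus.of α hα w) ∈
      closure (Set.range fun h : H =>
        toProf (MappingTorus α hα) (MappingTorus.of α hα (h : FreeGroup ι))) := by
  obtain ⟨n, hn⟩ := hn
  refine toProf_mem_closure_range _ _ fun N => ?_
  have hK : ∀ s ∈ H.map (MappingTorus.of α hα),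
      MappingTorus.t α hα * s * (MappingTorus.t α hα)⁻¹ ∈ H.map (MappingTorus.of α hα) := by
    rintro _ ⟨h, hh, rfl⟩
    exact ⟨α h, hHinv h hh, (MappingTorus.t_mul_of_mul_t_inv α hα h).symm⟩
  obtain ⟨_, ⟨h, hh, rfl⟩, hw⟩ := QuotientGroup.mk_mem_map_of_conj_pow_mem N.1 hK
    ⟨_, hn, (MappingTorus.t_pow_mul_of_mul_t_pow_inv α hα n w).symm⟩
  exact ⟨⟨h, hh⟩, hw⟩

/-- Let `F` be a finitely generated free group, `α : F → F` an injective endomorphism,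
`H` a finitely generated `α`-invariant subgroup and `w ∈ F`.  If `αⁿ(w) ∈ H` for some
`n`, then the image of `w` in the profinite completion of the mapping torus `M_α` lies
in the closure of the image of `H`. -/
theorem mem_closure_image_of_iterate_mem {ι : Type} [Finite ι]
    (α : FreeGroup ι →* FreeGroup ι) (hα : Function.Injective ⇑α)
    (H : Subgroup (FreeGroup ι)) (hHfg : H.FG) (hHinv : ∀ h ∈ H, α h ∈ H)
    (w : FreeGroup ι) (hn : ∃ n : ℕ, (⇑α)^[n] w ∈ H) :
    toProf (MappingTorus α hα) (MappingTorus.of α hα w) ∈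
      closure (Set.range fun h : H =>
        toProf (MappingTorus α hα) (MappingTorus.of α hα (h : FreeGroup ι))) :=
  mem_closure_image_of_iterate_mem_general α hα H hHinv w hn
end
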